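/- arXiv:2501.16340 — 5 statements merged into one kernel-verified Lean document; each statement's English description precedes it below -/
import Mathlib

section
/- (Generalized Cauchy–Schwarz for Gram determinants) For any vectors a₁,…,aₙ, b₁,…,bₙ in a real inner product space, (det(⟨aᵢ, bⱼ⟩))² ≤ det(⟨aᵢ, aⱼ⟩) · det(⟨bᵢ, bⱼ⟩). -/
/-!
`det (⟪aᵢ, bⱼ⟫)` is the inner product of `a₁ ∧ ⋯ ∧ aₙ` and `b₁ ∧ ⋯ ∧ bₙ` in `⋀ⁿ`, and the two Gram
determinants are the squared norms of these wedges, so the inequality is Cauchy–Schwarz in `⋀ⁿ`.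
Mathlib's inner product on `⋀ⁿ E` needs `E` finite-dimensional, so we first pass to the span of
the `aᵢ` and `bⱼ`.
-/

open Matrix

open RealInnerProductSpace in
theorem det_inner_sq_le_of_finiteDimensional {n : ℕ} {E : Type*} [NormedAddCommGroup E]
    [InnerProductSpace ℝ E] [FiniteDimensional ℝ E] (a b : Fin n → E) :
    det (of fun i j ↦ ⟪a i, b j⟫) ^ 2 ≤ det (gram ℝ a) * det (gram ℝ b) := by
  have h : det (of fun i j ↦ ⟪a i, b j⟫) =
      ⟪exteriorPower.ιMulti ℝ n a, exteriorPower.ιMulti ℝ n b⟫ := by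
    rw [exteriorPower.inner_ιMulti_ιMulti, ← det_transpose]
    rfl
  rw [h, sq, ← exteriorPower.inner_ιMulti_self, ← exteriorPower.inner_ιMulti_self]
  exact real_inner_mul_inner_self_le _ _

theorem gram_det_cauchy_schwarz {V : Type*} [NormedAddCommGroup V] [InnerProductSpace ℝ V]
    {n : ℕ} (a b : Fin n → V) :
    ((Matrix.of fun i j => (inner ℝ (a i) (b j) : ℝ)).det) ^ 2 ≤
      (Matrix.of fun i j => (inner ℝ (a i) (a j) : ℝ)).det *
        (Matrix.of fun i j => (inner ℝ (b i) (b j) : ℝ)).det := by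
  let W := Submodule.span ℝ (Set.range (Sum.elim a b))
  have : FiniteDimensional ℝ W := FiniteDimensional.span_of_finite ℝ (Set.finite_range _)
  let a' (i : Fin n) : W := ⟨a i, Submodule.subset_span ⟨.inl i, rfl⟩⟩
  let b' (i : Fin n) : W := ⟨b i, Submodule.subset_span ⟨.inr i, rfl⟩⟩
  exact det_inner_sq_le_of_finiteDimensional a' b'
end

section
/- Equality holds in the Gram-determinant Cauchy–Schwarz inequality, i.e. (det(⟨aᵢ,bⱼ⟩))² = det(⟨aᵢ,aⱼ⟩)·det(⟨bᵢ,bⱼ⟩), with both sides nonzero, if and only if a₁,…,aₙ are linearly independent, b₁,…,bₙ are linearly independent, and span{a₁,…,aₙ} = span{b₁,…,bₙ}. -/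
/-!
Split `b = p + q`, with `pⱼ` the orthogonal projection of `bⱼ` onto `span a` and `qⱼ ⟂ span a`.
Then `⟪aᵢ, bⱼ⟫ = ⟪aᵢ, pⱼ⟫` and `gram b = gram p + gram q`, and since `p = a C` for a coefficient
matrix `C`, `det ⟪aᵢ, bⱼ⟫ ^ 2 = det (gram a) * det (gram p)`. Equality therefore says
`det (gram p + gram q) = det (gram p)`; as `gram p` is positive definite and `gram q` positive
semidefinite, this forces `gram q = 0`, i.e. `span b ≤ span a`. The hypotheses are symmetric in
`a` and `b`, so the spans agree. Conversely, if `b = a C` both sides equal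
`det (gram a) ^ 2 * det C ^ 2`.
-/

open Matrix
open scoped InnerProductSpace

namespace Matrix

section PosSemidef

variable {n : Type*} [Fintype n] [DecidableEq n]

theorem IsHermitian.det_one_add {S : Matrix n n ℝ} (hS : S.IsHermitian) :
    (1 + S).det = ∏ i, (1 + hS.eigenvalues i) := by
  set U : Matrix n n ℝ := (hS.eigenvectorUnitary : Matrix n n ℝ)
  have hdiag : diagonal (1 + hS.eigenvalues) = 1 + diagonal hS.eigenvalues := by
    rw [← diagonal_one, diagonal_add]; rfl
  have hconj : U * diagonal (1 + hS.eigenvalues) * star U = 1 + S := by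
    rw [hdiag, Matrix.mul_add, Matrix.add_mul, Matrix.mul_one,
      mem_unitaryGroup_iff.mp hS.eigenvectorUnitary.2]
    conv_rhs => rw [hS.spectral_theorem]
    simp [U]
  rw [← hconj, det_mul_comm, ← Matrix.mul_assoc, Unitary.coe_star_mul_self, Matrix.one_mul,
    det_diagonal]
  rfl

theorem PosSemidef.eq_zero_of_det_one_add_eq_one {S : Matrix n n ℝ} (hS : S.PosSemidef)
    (h : (1 + S).det = 1) : S = 0 := by
  rw [← hS.isHermitian.eigenvalues_eq_zero_iff]
  ext i
  rw [Pi.zero_apply]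
  have hle : 1 + hS.isHermitian.eigenvalues i ≤ 1 := by
    calc 1 + hS.isHermitian.eigenvalues i = ∏ j ∈ {i}, (1 + hS.isHermitian.eigenvalues j) := by simp
    _ ≤ ∏ j, (1 + hS.isHermitian.eigenvalues j) :=
        Finset.prod_le_prod_of_subset_of_one_le (Finset.subset_univ _)
          (fun j _ => by linarith [hS.eigenvalues_nonneg j])
          (fun j _ _ => by linarith [hS.eigenvalues_nonneg j])
    _ = 1 := by rw [← hS.isHermitian.det_one_add, h]
  exact le_antisymm (by linarith) (hS.eigenvalues_nonneg i)

open scoped MatrixOrder in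
theorem PosSemidef.eq_zero_of_det_add_eq_det {X Y : Matrix n n ℝ} (hY : Y.PosSemidef)
    (hX : X.PosDef) (h : (X + Y).det = X.det) : Y = 0 := by
  set R := CFC.sqrt X
  have hRR : R * R = X := CFC.sqrt_mul_sqrt_self X hX.posSemidef.nonneg
  have hR : IsUnit R.det := isUnit_iff_ne_zero.mpr fun h0 =>
    hX.det_pos.ne' (by rw [← hRR, det_mul, h0, zero_mul])
  have hRH : R⁻¹ᴴ = R⁻¹ := (CFC.sqrt_nonneg X).posSemidef.inv.isHermitian
  set S := R⁻¹ * Y * R⁻¹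
  have hS : S.PosSemidef := by simpa only [hRH] using hY.conjTranspose_mul_mul_same R⁻¹
  have hRSR : R * S * R = Y := by
    simp only [S, ← Matrix.mul_assoc, mul_nonsing_inv _ hR, Matrix.one_mul,
      nonsing_inv_mul_cancel_right _ _ hR]
  have hXY : X + Y = R * (1 + S) * R := by
    rw [Matrix.mul_add, Matrix.add_mul, Matrix.mul_one, hRR, hRSR]
  have hdet : X.det * (1 + S).det = X.det := by
    calc X.det * (1 + S).det = (R * (1 + S) * R).det := by
          rw [← hRR]; simp only [det_mul]; ring
      _ = X.det := by rw [← hXY, h]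
  rw [← hRSR, hS.eq_zero_of_det_one_add_eq_one ((mul_eq_left₀ hX.det_pos.ne').mp hdet),
    Matrix.mul_zero, Matrix.zero_mul]

end PosSemidef

section Gram

variable {V : Type*} [NormedAddCommGroup V] [InnerProductSpace ℝ V]

theorem of_inner_sum_smul_right {ι κ μ : Type*} [Fintype ι] (u : μ → V) (w : ι → V)
    (C : Matrix ι κ ℝ) :
    (of fun i j => ⟪u i, ∑ k, C k j • w k⟫_ℝ) = (of fun i k => ⟪u i, w k⟫_ℝ) * C := by
  ext i j
  simp [inner_sum, inner_smul_right, mul_apply, mul_comm]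

theorem gram_sum_smul {ι κ : Type*} [Fintype ι] (w : ι → V) (C : Matrix ι κ ℝ) :
    gram ℝ (fun j => ∑ k, C k j • w k) = Cᵀ * gram ℝ w * C := by
  ext i j
  simp only [gram_apply, sum_inner, inner_sum, inner_smul_left, inner_smul_right, mul_apply,
    transpose_apply, Finset.mul_sum, Finset.sum_mul, conj_trivial]
  exact Finset.sum_congr rfl fun _ _ => Finset.sum_congr rfl fun _ _ => by ring

theorem gram_add_of_forall_inner_eq_zero {ι : Type*} {p q : ι → V}
    (h : ∀ i j, ⟪p i, q j⟫_ℝ = 0) : gram ℝ (p + q) = gram ℝ p + gram ℝ q := by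
  ext i j
  simp [inner_add_left, inner_add_right, h, real_inner_comm (p _) (q _)]

variable {ι : Type*} [Fintype ι] [DecidableEq ι]

theorem det_of_inner_comm (a b : ι → V) :
    (of fun i j => ⟪b i, a j⟫_ℝ).det = (of fun i j => ⟪a i, b j⟫_ℝ).det := by
  rw [← det_transpose]
  congr 1
  ext i j
  exact real_inner_comm _ _

theorem det_of_inner_sq_of_forall_mem_span {a b : ι → V}
    (hb : ∀ j, b j ∈ Submodule.span ℝ (Set.range a)) :
    (of fun i j => ⟪a i, b j⟫_ℝ).det ^ 2 = (gram ℝ a).det * (gram ℝ b).det := by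
  choose c hc using fun j => (Submodule.mem_span_range_iff_exists_fun ℝ).mp (hb j)
  obtain rfl : b = fun j => ∑ i, (of fun i j => c j i) i j • a i := funext fun j => (hc j).symm
  rw [of_inner_sum_smul_right, gram_sum_smul]
  simp only [det_mul, det_transpose]
  change ((gram ℝ a).det * _) ^ 2 = _
  ring

theorem span_range_le_of_det_of_inner_sq_eq {a b : ι → V}
    (h : (of fun i j => ⟪a i, b j⟫_ℝ).det ^ 2 = (gram ℝ a).det * (gram ℝ b).det)
    (ha : (gram ℝ a).det ≠ 0) (hb : (gram ℝ b).det ≠ 0) :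
    Submodule.span ℝ (Set.range b) ≤ Submodule.span ℝ (Set.range a) := by
  set U := Submodule.span ℝ (Set.range a)
  have := FiniteDimensional.span_of_finite ℝ (Set.finite_range a)
  set p : ι → V := fun j => U.starProjection (b j)
  set q : ι → V := fun j => b j - p j
  have hpU : ∀ j, p j ∈ U := fun j => U.starProjection_apply_mem (b j)
  have hqU : ∀ j, q j ∈ Uᗮ := fun j => U.sub_starProjection_mem_orthogonal (b j)
  have hMab : (of fun i j => ⟪a i, b j⟫_ℝ) = of fun i j => ⟪a i, p j⟫_ℝ := by
    ext i j
    rw [of_apply, of_apply, ← sub_add_cancel (b j) (p j), inner_add_right,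
      Submodule.inner_right_of_mem_orthogonal (Submodule.subset_span (Set.mem_range_self i))
        (hqU j), zero_add]
  have hGb : gram ℝ b = gram ℝ p + gram ℝ q := by
    rw [← gram_add_of_forall_inner_eq_zero fun i j =>
      Submodule.inner_right_of_mem_orthogonal (hpU i) (hqU j)]
    exact congr_arg _ (funext fun j => (add_sub_cancel (p j) (b j)).symm)
  have hGp : (gram ℝ p).det = (gram ℝ b).det := by
    rw [hMab, det_of_inner_sq_of_forall_mem_span hpU] at h
    exact mul_left_cancel₀ ha h
  have hpos : (gram ℝ p).PosDef := (posSemidef_gram ℝ p).posDef_iff_det_ne_zero.mpr (hGp ▸ hb)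
  have hq : gram ℝ q = 0 :=
    (posSemidef_gram ℝ q).eq_zero_of_det_add_eq_det hpos (by rw [← hGb, hGp])
  rw [Submodule.span_le, Set.range_subset_iff]
  intro j
  have : b j = p j := sub_eq_zero.mp (inner_self_eq_zero.mp (congr_fun₂ hq j j))
  exact this ▸ hpU j

end Gram

end Matrix

theorem gram_det_cauchy_schwarz_equality_iff {V : Type*} [NormedAddCommGroup V]
    [InnerProductSpace ℝ V] {n : ℕ} (a b : Fin n → V) :
    (((Matrix.of fun i j => (inner ℝ (a i) (b j) : ℝ)).det) ^ 2 =
        (Matrix.of fun i j => (inner ℝ (a i) (a j) : ℝ)).det *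
          (Matrix.of fun i j => (inner ℝ (b i) (b j) : ℝ)).det ∧
      (Matrix.of fun i j => (inner ℝ (a i) (a j) : ℝ)).det *
          (Matrix.of fun i j => (inner ℝ (b i) (b j) : ℝ)).det ≠ 0) ↔
    (LinearIndependent ℝ a ∧ LinearIndependent ℝ b ∧
      Submodule.span ℝ (Set.range a) = Submodule.span ℝ (Set.range b)) := by
  change (_ = (gram ℝ a).det * (gram ℝ b).det ∧ (gram ℝ a).det * (gram ℝ b).det ≠ 0) ↔ _
  simp only [← det_gram_ne_zero_iff_linearIndependent (𝕜 := ℝ)]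
  constructor
  · rintro ⟨h, hne⟩
    obtain ⟨ha, hb⟩ := mul_ne_zero_iff.mp hne
    have h' : (of fun i j => ⟪b i, a j⟫_ℝ).det ^ 2 = (gram ℝ b).det * (gram ℝ a).det := by
      rw [det_of_inner_comm, h, mul_comm]
    exact ⟨ha, hb, le_antisymm (span_range_le_of_det_of_inner_sq_eq h' hb ha)
      (span_range_le_of_det_of_inner_sq_eq h ha hb)⟩
  · rintro ⟨ha, hb, hspan⟩
    refine ⟨det_of_inner_sq_of_forall_mem_span fun j => ?_, mul_ne_zero ha hb⟩
    exact hspan ▸ Submodule.subset_span (Set.mem_range_self j)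
end

section
/- Let a₁,…,aₙ be linearly independent vectors in a real inner product space and let d₁,…,dₙ be vectors each orthogonal to span{a₁,…,aₙ}. Then det(⟨aᵢ+dᵢ, aⱼ+dⱼ⟩) ≥ det(⟨aᵢ, aⱼ⟩), with equality if and only if d₁ = ⋯ = dₙ = 0. -/
/-!
Orthogonality kills the cross terms, so `gram (a + d) = gram a + gram d` is a positive definite
matrix `A` plus a positive semidefinite one `D`. Writing `A = Bᴴ B` with `B` invertible gives
`det (A + D) = det A * det (1 + M)` with `M = B⁻ᴴ D B⁻¹ ⪰ 0`, and
`det (1 + M) = ∏ (1 + λᵢ) ≥ 1 + tr M ≥ 1`. Equality forces `tr M = 0`, hence `M = 0`, `D = 0`,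
and `gram d = 0` only for `d = 0`.
-/

open Matrix

theorem Finset.one_add_sum_le_prod_one_add {ι R : Type*} [CommSemiring R] [PartialOrder R]
    [IsOrderedRing R] (s : Finset ι) {f : ι → R} (hf : ∀ i ∈ s, 0 ≤ f i) :
    1 + ∑ i ∈ s, f i ≤ ∏ i ∈ s, (1 + f i) := by
  classical
  induction s using Finset.induction_on with
  | empty => simp
  | insert a s ha ih =>
    rw [sum_insert ha, prod_insert ha]
    have hfa := hf a (mem_insert_self a s)
    have hs := ih fun i hi ↦ hf i (mem_insert_of_mem hi)
    have hsum : 0 ≤ ∑ i ∈ s, f i := sum_nonneg fun i hi ↦ hf i (mem_insert_of_mem hi)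
    calc 1 + (f a + ∑ i ∈ s, f i)
        ≤ 1 + (f a + ∑ i ∈ s, f i) + f a * ∑ i ∈ s, f i :=
          le_add_of_nonneg_right (mul_nonneg hfa hsum)
      _ = (1 + f a) * (1 + ∑ i ∈ s, f i) := by ring
      _ ≤ (1 + f a) * ∏ i ∈ s, (1 + f i) :=
          mul_le_mul_of_nonneg_left hs (add_nonneg zero_le_one hfa)

namespace Matrix

variable {n : Type*} [Fintype n] [DecidableEq n]

theorem IsHermitian.det_one_add_s10 {M : Matrix n n ℝ} (hM : M.IsHermitian) :
    (1 + M).det = ∏ i, (1 + hM.eigenvalues i) := by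
  conv_lhs =>
    rw [hM.spectral_theorem, ← map_one (Unitary.conjStarAlgAut ℝ _ hM.eigenvectorUnitary),
      ← map_add, det_map, ← diagonal_one, diagonal_add, det_diagonal]
  simp

theorem PosSemidef.one_add_trace_le_det_one_add {M : Matrix n n ℝ} (hM : M.PosSemidef) :
    1 + M.trace ≤ (1 + M).det := by
  rw [hM.isHermitian.det_one_add_s10, hM.isHermitian.trace_eq_sum_eigenvalues]
  exact Finset.one_add_sum_le_prod_one_add _ fun i _ ↦ hM.eigenvalues_nonneg i

theorem PosSemidef.one_le_det_one_add {M : Matrix n n ℝ} (hM : M.PosSemidef) :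
    1 ≤ (1 + M).det :=
  (le_add_of_nonneg_right hM.trace_nonneg).trans hM.one_add_trace_le_det_one_add

theorem PosSemidef.det_one_add_eq_one_iff {M : Matrix n n ℝ} (hM : M.PosSemidef) :
    (1 + M).det = 1 ↔ M = 0 := by
  refine ⟨fun h ↦ hM.trace_eq_zero_iff.mp ?_, fun h ↦ by simp [h]⟩
  linarith [hM.trace_nonneg, hM.one_add_trace_le_det_one_add]

open scoped MatrixOrder in
theorem PosDef.exists_det_add_eq_det_mul {A D : Matrix n n ℝ} (hA : A.PosDef) (hD : D.PosSemidef) :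
    ∃ M : Matrix n n ℝ, M.PosSemidef ∧ (M = 0 ↔ D = 0) ∧ (A + D).det = A.det * (1 + M).det := by
  obtain ⟨B, hB, rfl⟩ := CStarAlgebra.isStrictlyPositive_iff_eq_star_mul_self.mp
    hA.isStrictlyPositive
  have hBdet : IsUnit B.det := (isUnit_iff_isUnit_det B).mp hB
  have hD_eq : Bᴴ * (B⁻¹ᴴ * D * B⁻¹) * B = D := by
    rw [← Matrix.mul_assoc, ← Matrix.mul_assoc, ← conjTranspose_mul, nonsing_inv_mul B hBdet,
      conjTranspose_one, Matrix.one_mul, Matrix.mul_assoc, nonsing_inv_mul B hBdet, Matrix.mul_one]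
  refine ⟨B⁻¹ᴴ * D * B⁻¹, hD.conjTranspose_mul_mul_same B⁻¹,
    ⟨fun h ↦ ?_, fun h ↦ by simp [h]⟩, ?_⟩
  · rw [← hD_eq, h, Matrix.mul_zero, Matrix.zero_mul]
  · have : star B * B + D = Bᴴ * (1 + B⁻¹ᴴ * D * B⁻¹) * B := by
      rw [Matrix.mul_add, Matrix.add_mul, hD_eq, Matrix.mul_one, star_eq_conjTranspose]
    rw [this, det_mul, det_mul, star_eq_conjTranspose, det_mul]
    ring

theorem PosDef.det_le_det_add {A D : Matrix n n ℝ} (hA : A.PosDef) (hD : D.PosSemidef) :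
    A.det ≤ (A + D).det := by
  obtain ⟨M, hM, -, hdet⟩ := hA.exists_det_add_eq_det_mul hD
  rw [hdet]
  exact le_mul_of_one_le_right hA.det_pos.le hM.one_le_det_one_add

theorem PosDef.det_add_eq_det_iff {A D : Matrix n n ℝ} (hA : A.PosDef) (hD : D.PosSemidef) :
    (A + D).det = A.det ↔ D = 0 := by
  obtain ⟨M, hM, hMD, hdet⟩ := hA.exists_det_add_eq_det_mul hD
  rw [hdet, mul_eq_left₀ hA.det_pos.ne', hM.det_one_add_eq_one_iff, hMD]

open scoped InnerProductSpace

theorem gram_add_of_inner_eq_zero {𝕜 E ι : Type*} [RCLike 𝕜] [SeminormedAddCommGroup E]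
    [InnerProductSpace 𝕜 E] {v w : ι → E} (h : ∀ i j, ⟪w i, v j⟫_𝕜 = 0) :
    gram 𝕜 (v + w) = gram 𝕜 v + gram 𝕜 w := by
  ext i j
  simp [inner_add_left, inner_add_right, h, inner_eq_zero_symm.mp (h j i)]

theorem gram_eq_zero_iff {𝕜 E ι : Type*} [RCLike 𝕜] [NormedAddCommGroup E]
    [InnerProductSpace 𝕜 E] {v : ι → E} : gram 𝕜 v = 0 ↔ v = 0 :=
  ⟨fun h ↦ funext fun i ↦ inner_self_eq_zero.mp (congrFun₂ h i i), fun h ↦ h ▸ gram_zero⟩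

end Matrix

theorem gram_det_add_orthogonal_ge {V : Type*} [NormedAddCommGroup V] [InnerProductSpace ℝ V]
    {n : ℕ} (a d : Fin n → V) (ha : LinearIndependent ℝ a)
    (hd : ∀ i j : Fin n, (inner ℝ (d i) (a j) : ℝ) = 0) :
    (Matrix.of fun i j => (inner ℝ (a i) (a j) : ℝ)).det ≤
        (Matrix.of fun i j => (inner ℝ (a i + d i) (a j + d j) : ℝ)).det ∧
      ((Matrix.of fun i j => (inner ℝ (a i + d i) (a j + d j) : ℝ)).det =
          (Matrix.of fun i j => (inner ℝ (a i) (a j) : ℝ)).det ↔ ∀ i, d i = 0) := by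
  change (gram ℝ a).det ≤ (gram ℝ (a + d)).det ∧
    ((gram ℝ (a + d)).det = (gram ℝ a).det ↔ ∀ i, d i = 0)
  have hA := posDef_gram_of_linearIndependent ha
  have hD := posSemidef_gram ℝ d
  rw [gram_add_of_inner_eq_zero hd]
  exact ⟨hA.det_le_det_add hD,
    (hA.det_add_eq_det_iff hD).trans (gram_eq_zero_iff.trans funext_iff)⟩
end

section
/- For real m×m orthogonal matrices A with det A = 1, the n×n minor of A formed from the first n rows and columns i₁<⋯<iₙ equals (−1)^{n(n+1)/2}·(−1)^{i₁+⋯+iₙ} times the complementary (m−n)×(m−n) minor (formed by deleting the first n rows and columns i₁,…,iₙ). -/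
/-!
Put the columns `i₁, …, iₙ` first and the complementary columns after them, keeping both lists
in increasing order. This turns `A` into an orthogonal matrix `M` with `det M = sign σ`, where
`σ` is the shuffle permutation of the columns. If `M = [P Q; R S]` with `M Mᵀ = 1`, then
`M [1 Rᵀ; 0 Sᵀ] = [P 0; R 1]`, so `det P = det M · det S`. The inversions of `σ` are the pairs
formed by a position `k < n` and a later position whose column precedes `iₖ`; there are
`iₖ - k` of them (0-based), which gives the sign.
-/

open Matrix Finset

theorem Matrix.det_toBlocks₁₁_of_mul_transpose_eq_one {R α β : Type*} [CommRing R]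
    [Fintype α] [Fintype β] [DecidableEq α] [DecidableEq β]
    (M : Matrix (α ⊕ β) (α ⊕ β) R) (hM : M * Mᵀ = 1) :
    M.toBlocks₁₁.det = M.det * M.toBlocks₂₂.det := by
  rw [← fromBlocks_toBlocks M, fromBlocks_transpose, fromBlocks_multiply, ← fromBlocks_one,
    fromBlocks_inj] at hM
  obtain ⟨-, h₁₂, -, h₂₂⟩ := hM
  have hclear : M * fromBlocks 1 M.toBlocks₂₁ᵀ 0 M.toBlocks₂₂ᵀ =
      fromBlocks M.toBlocks₁₁ 0 M.toBlocks₂₁ 1 := by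
    conv_lhs => rw [← fromBlocks_toBlocks M]
    rw [fromBlocks_multiply]
    simp [h₁₂, h₂₂]
  have := congrArg det hclear
  rwa [det_mul, det_fromBlocks_zero₂₁, det_fromBlocks_zero₁₂, det_one, det_one, one_mul,
    mul_one, det_transpose, eq_comm] at this

namespace Equiv.Perm

variable {m : ℕ} (σ : Perm (Fin m))

theorem sign_eq_neg_one_pow_sum_card_inversions :
    sign σ = (-1) ^ ∑ x, #{y ∈ Ioi x | σ y < σ x} := by
  rw [sign_eq_prod_prod_Ioi, ← prod_pow_eq_pow_sum]
  refine prod_congr rfl fun x _ => ?_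
  rw [prod_ite, prod_const_one, one_mul, prod_const]
  simp only [not_lt]
  congr 2
  refine filter_congr fun y hy => ?_
  exact (σ.injective.ne (mem_Ioi.mp hy).ne').le_iff_lt

theorem card_filter_apply_lt (x : Fin m) : #{y | σ y < σ x} = σ x := by
  have : ({y | σ y < σ x} : Finset (Fin m)) = (Iio (σ x)).map σ.symm.toEmbedding := by
    ext y; simp
  rw [this, card_map, Fin.card_Iio]

variable {σ} {n : ℕ}

theorem card_inversions_add_of_strictMonoOn (hσ : StrictMonoOn σ {x | (x : ℕ) < n})
    {x : Fin m} (hx : (x : ℕ) < n) :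
    #{y ∈ Ioi x | σ y < σ x} + x = σ x := by
  have hsplit : ({y | σ y < σ x} : Finset (Fin m)) = {y ∈ Ioi x | σ y < σ x} ∪ Iio x := by
    ext y
    simp only [mem_filter, mem_univ, true_and, mem_union, mem_Ioi, mem_Iio]
    refine ⟨fun hy => ?_, ?_⟩
    · rcases lt_trichotomy x y with hxy | rfl | hxy
      · exact .inl ⟨hxy, hy⟩
      · exact absurd hy (lt_irrefl _)
      · exact .inr hxy
    · rintro (⟨-, hy⟩ | hyx)
      · exact hy
      · exact hσ (lt_trans (Fin.lt_def.mp hyx) hx) hx hyx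
  have hdisj : _root_.Disjoint {y ∈ Ioi x | σ y < σ x} (Iio x) :=
    disjoint_left.mpr fun y hy hy' => lt_asymm (mem_Iio.mp hy') (mem_Ioi.mp (mem_filter.mp hy).1)
  rw [← Fin.card_Iio x, ← card_union_of_disjoint hdisj, ← hsplit, card_filter_apply_lt]

theorem card_inversions_eq_zero_of_strictMonoOn (hσ : StrictMonoOn σ {x | n ≤ (x : ℕ)})
    {x : Fin m} (hx : n ≤ (x : ℕ)) :
    #{y ∈ Ioi x | σ y < σ x} = 0 := by
  refine card_eq_zero.mpr (filter_eq_empty_iff.mpr fun y hy => ?_)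
  have hxy : x < y := mem_Ioi.mp hy
  exact lt_asymm (hσ hx (hx.trans hxy.le) hxy)

theorem sign_eq_neg_one_pow_of_strictMonoOn (h : n ≤ m) (hlo : StrictMonoOn σ {x | (x : ℕ) < n})
    (hhi : StrictMonoOn σ {x | n ≤ (x : ℕ)}) :
    sign σ = (-1) ^ (∑ i : Fin n, (σ (Fin.castLE h i) : ℕ) + ∑ i : Fin n, (i : ℕ)) := by
  set c : Fin m → ℕ := fun x => #{y ∈ Ioi x | σ y < σ x}
  have hc : ∑ x, c x = ∑ i : Fin n, c (Fin.castLE h i) := by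
    rw [show ∑ i : Fin n, c (Fin.castLE h i) = ∑ x ∈ univ.map (Fin.castLEEmb h), c x from
      (sum_map univ (Fin.castLEEmb h) c).symm]
    refine (sum_subset (subset_univ _) fun x _ hx => ?_).symm
    refine card_inversions_eq_zero_of_strictMonoOn hhi (not_lt.mp fun hxn => hx ?_)
    exact mem_map.mpr ⟨⟨x, hxn⟩, mem_univ _, rfl⟩
  have hσc : ∑ i : Fin n, (σ (Fin.castLE h i) : ℕ) = ∑ x, c x + ∑ i : Fin n, (i : ℕ) := by
    rw [hc, ← sum_add_distrib]
    exact sum_congr rfl fun i _ => (card_inversions_add_of_strictMonoOn hlo i.isLt).symm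
  rw [sign_eq_neg_one_pow_sum_card_inversions, hσc, add_assoc, ← two_mul, pow_add, pow_mul,
    neg_one_sq, one_pow, mul_one]

end Equiv.Perm

namespace Fin

variable {m n : ℕ} {f : Fin n → Fin m} {g : Fin (m - n) → Fin m}

def shuffle (f : Fin n → Fin m) (g : Fin (m - n) → Fin m) (x : Fin m) : Fin m :=
  if h : (x : ℕ) < n then f ⟨x, h⟩ else g ⟨x - n, by omega⟩

theorem shuffle_castLE (h : n ≤ m) (i : Fin n) : shuffle f g (Fin.castLE h i) = f i :=
  dif_pos i.isLt

theorem shuffle_mk_add (j : Fin (m - n)) (h : n + j < m) :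
    shuffle f g ⟨n + j, h⟩ = g j := by
  simp [shuffle]

theorem shuffle_injective (hf : f.Injective) (hg : g.Injective)
    (hfg : ∀ i j, f i ≠ g j) : (shuffle f g).Injective := by
  intro x y hxy
  unfold shuffle at hxy
  split_ifs at hxy with hx hy hy
  · exact Fin.ext (Fin.mk.inj_iff.mp (hf hxy))
  · exact absurd hxy (hfg _ _)
  · exact absurd hxy.symm (hfg _ _)
  · have := Fin.mk.inj_iff.mp (hg hxy)
    exact Fin.ext (by omega)

theorem strictMonoOn_shuffle_lt (hf : StrictMono f) :
    StrictMonoOn (shuffle f g) {x | (x : ℕ) < n} := by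
  intro x (hx : (x : ℕ) < n) y (hy : (y : ℕ) < n) hxy
  rw [shuffle, shuffle, dif_pos hx, dif_pos hy]
  exact hf (Fin.mk_lt_mk.mpr hxy)

theorem strictMonoOn_shuffle_ge (hg : StrictMono g) :
    StrictMonoOn (shuffle f g) {x | n ≤ (x : ℕ)} := by
  intro x (hx : n ≤ (x : ℕ)) y (hy : n ≤ (y : ℕ)) hxy
  rw [shuffle, shuffle, dif_neg hx.not_gt, dif_neg hy.not_gt]
  exact hg (Fin.mk_lt_mk.mpr (by have : (x : ℕ) < y := hxy; omega))

noncomputable def shufflePerm (hf : f.Injective) (hg : g.Injective)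
    (hcompl : Set.range g = (Set.range f)ᶜ) : Equiv.Perm (Fin m) :=
  Equiv.ofBijective (shuffle f g) <| Finite.injective_iff_bijective.mp <|
    shuffle_injective hf hg fun i j hij =>
      (hcompl ▸ Set.mem_range_self j : g j ∈ (Set.range f)ᶜ) ⟨i, hij⟩

theorem sign_shufflePerm (h : n ≤ m) (hf : StrictMono f) (hg : StrictMono g)
    (hcompl : Set.range g = (Set.range f)ᶜ) :
    Equiv.Perm.sign (shufflePerm hf.injective hg.injective hcompl) =
      (-1) ^ (∑ i, (f i : ℕ) + ∑ i : Fin n, (i : ℕ)) := by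
  rw [Equiv.Perm.sign_eq_neg_one_pow_of_strictMonoOn h (strictMonoOn_shuffle_lt hf)
    (strictMonoOn_shuffle_ge hg)]
  simp [shufflePerm, shuffle_castLE]

end Fin

theorem Matrix.submatrix_mul_transpose_eq_one {R ι κ : Type*} [Semiring R] [Fintype ι]
    [Fintype κ] [DecidableEq ι] [DecidableEq κ] {A : Matrix ι ι R} (hA : A * Aᵀ = 1)
    (e₁ e₂ : κ ≃ ι) : A.submatrix e₁ e₂ * (A.submatrix e₁ e₂)ᵀ = 1 := by
  rw [transpose_submatrix, submatrix_mul_equiv, hA, submatrix_one_equiv]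

theorem neg_one_pow_triangle_add_sum {R : Type*} [Monoid R] [HasDistribNeg R] {n : ℕ}
    (a : Fin n → ℕ) :
    (-1 : R) ^ (n * (n + 1) / 2 + ∑ i, (a i + 1)) = (-1) ^ (∑ i, a i + ∑ i : Fin n, (i : ℕ)) := by
  have hgauss : n * (n + 1) / 2 = ∑ i : Fin n, (i : ℕ) + n := by
    rw [Fin.sum_univ_eq_sum_range (fun i => i), ← sum_range_succ, sum_range_id,
      Nat.add_sub_cancel, mul_comm]
  have hexp : n * (n + 1) / 2 + ∑ i, (a i + 1) = ∑ i, a i + ∑ i : Fin n, (i : ℕ) + 2 * n := by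
    rw [hgauss, sum_add_distrib, sum_const, card_univ, Fintype.card_fin, smul_eq_mul, mul_one]
    ring
  rw [hexp, pow_add _ _ (2 * n), pow_mul, neg_one_sq, one_pow, mul_one]

theorem jacobi_complementary_minor {m n : ℕ} (hnm : n < m)
    (A : Matrix (Fin m) (Fin m) ℝ) (hA : Aᵀ * A = 1) (hdet : A.det = 1)
    (f : Fin n → Fin m) (hf : StrictMono f)
    (g : Fin (m - n) → Fin m) (hg : StrictMono g)
    (hcompl : Set.range g = (Set.range f)ᶜ) :
    (A.submatrix (fun i : Fin n => (⟨i.val, lt_of_lt_of_le i.isLt hnm.le⟩ : Fin m)) f).det =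
      (-1 : ℝ) ^ (n * (n + 1) / 2 + ∑ i, ((f i : ℕ) + 1)) *
        (A.submatrix (fun i : Fin (m - n) =>
          (⟨n + i.val, by have := i.isLt; omega⟩ : Fin m)) g).det := by
  let σ := Fin.shufflePerm hf.injective hg.injective hcompl
  let e : Fin n ⊕ Fin (m - n) ≃ Fin m :=
    finSumFinEquiv.trans (finCongr (Nat.add_sub_cancel' hnm.le))
  let M := (A.submatrix id σ).submatrix e e
  have hM : M * Mᵀ = 1 := submatrix_mul_transpose_eq_one (mul_eq_one_comm.mp hA) e (e.trans σ)
  have h₁₁ : M.toBlocks₁₁ = A.submatrix (fun i : Fin n => ⟨i, i.isLt.trans_le hnm.le⟩) f := by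
    ext i j
    exact congrArg (A _) (Fin.shuffle_castLE hnm.le j)
  have h₂₂ : M.toBlocks₂₂ = A.submatrix (fun i : Fin (m - n) => ⟨n + i, by omega⟩) g := by
    ext i j
    exact congrArg (A _) (Fin.shuffle_mk_add j _)
  rw [← h₁₁, ← h₂₂, M.det_toBlocks₁₁_of_mul_transpose_eq_one hM, det_submatrix_equiv_self,
    det_permute', hdet, mul_one, Fin.sign_shufflePerm hnm.le hf hg hcompl,
    neg_one_pow_triangle_add_sum]
  norm_cast
end

section
/- Let V be a finite-dimensional real inner product space of dimension m, and Σ₁, Σ₂ two n-dimensional subspaces with orthonormal bases (a₁,…,aₙ) and (b₁,…,bₙ). Define cos φ(Σ₁,Σ₂) = |det(⟨aᵢ,bⱼ⟩)| (this is well-defined up to sign choice). Then |det(⟨aᵢ,bⱼ⟩)| = |det(⟨aᵢ*,bⱼ*⟩)| where (a₁*,…,a_{m−n}*) and (b₁*,…,b_{m−n}*) are orthonormal bases of the orthogonal complements Σ₁^⊥ and Σ₂^⊥. That is, the angle between two n-dimensional subspaces equals the angle between their orthogonal complements. -/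
/-!
Concatenating `a` with `astar` and `b` with `bstar` gives two orthonormal bases of `V`. Their
change-of-basis matrix `(⟪eᵢ, fⱼ⟫)` is orthogonal, and its two diagonal blocks are the Gram matrices
of the theorem; the diagonal blocks of an orthogonal matrix have equal determinants up to sign.
-/

open Matrix

namespace Matrix

variable {l m R : Type*} [Fintype l] [Fintype m] [DecidableEq l] [DecidableEq m] [CommRing R]

/-- Writing `A = [P Q; R S]`, orthogonality gives `P Pᵀ = 1 - Q Qᵀ` and `Sᵀ S = 1 - Qᵀ Q`, and
these two have the same determinant by Sylvester's identity. -/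
theorem det_toBlocks₁₁_sq_eq_det_toBlocks₂₂_sq {A : Matrix (l ⊕ m) (l ⊕ m) R}
    (hA : Aᵀ * A = 1) : A.toBlocks₁₁.det ^ 2 = A.toBlocks₂₂.det ^ 2 := by
  have hAAt : A * Aᵀ = 1 := mul_eq_one_comm.mp hA
  rw [← fromBlocks_toBlocks A, fromBlocks_transpose, fromBlocks_multiply, ← fromBlocks_one,
    fromBlocks_inj] at hAAt hA
  set P := A.toBlocks₁₁
  set Q := A.toBlocks₁₂
  set S := A.toBlocks₂₂
  calc P.det ^ 2 = (P * Pᵀ).det := by rw [det_mul, det_transpose, sq]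
    _ = (1 - Q * Qᵀ).det := by rw [← hAAt.1, add_sub_cancel_right]
    _ = (1 - Qᵀ * Q).det := det_one_sub_mul_comm Q Qᵀ
    _ = (Sᵀ * S).det := by rw [← hA.2.2.2, add_sub_cancel_left]
    _ = S.det ^ 2 := by rw [det_mul, det_transpose, sq]

end Matrix

section

variable {𝕜 E ι κ : Type*} [RCLike 𝕜] [NormedAddCommGroup E] [InnerProductSpace 𝕜 E]

theorem Orthonormal.sumElim {u : ι → E} {w : κ → E} (hu : Orthonormal 𝕜 u)
    (hw : Orthonormal 𝕜 w) (huw : ∀ i j, inner 𝕜 (u i) (w j) = 0) :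
    Orthonormal 𝕜 (Sum.elim u w) := by
  refine ⟨Sum.forall.mpr ⟨hu.1, hw.1⟩, ?_⟩
  rintro (i | i) (j | j) hij
  · exact hu.2 fun h => hij (congrArg Sum.inl h)
  · exact huw i j
  · exact inner_eq_zero_symm.mp (huw j i)
  · exact hw.2 fun h => hij (congrArg Sum.inr h)

variable [Fintype ι] [Fintype κ] {K : Submodule 𝕜 E} {u : ι → E} {w : κ → E}

noncomputable def OrthonormalBasis.sumElimOfOrthogonal (hu : Orthonormal 𝕜 u)
    (hw : Orthonormal 𝕜 w) (hsu : Submodule.span 𝕜 (Set.range u) = K)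
    (hsw : Submodule.span 𝕜 (Set.range w) = Kᗮ) : OrthonormalBasis (ι ⊕ κ) 𝕜 E :=
  have : FiniteDimensional 𝕜 K := hsu ▸ FiniteDimensional.span_of_finite 𝕜 (Set.finite_range u)
  OrthonormalBasis.mk
    (hu.sumElim hw fun i j => K.inner_right_of_mem_orthogonal
      (hsu ▸ Submodule.subset_span ⟨i, rfl⟩) (hsw ▸ Submodule.subset_span ⟨j, rfl⟩))
    (by rw [Set.Sum.elim_range, Submodule.span_union, hsu, hsw,
      K.sup_orthogonal_of_hasOrthogonalProjection])

@[simp]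
theorem OrthonormalBasis.coe_sumElimOfOrthogonal (hu : Orthonormal 𝕜 u)
    (hw : Orthonormal 𝕜 w) (hsu : Submodule.span 𝕜 (Set.range u) = K)
    (hsw : Submodule.span 𝕜 (Set.range w) = Kᗮ) :
    ⇑(OrthonormalBasis.sumElimOfOrthogonal hu hw hsu hsw) = Sum.elim u w := by
  simp [OrthonormalBasis.sumElimOfOrthogonal]

theorem OrthonormalBasis.toBasis_toMatrix_apply (a b : OrthonormalBasis ι 𝕜 E) (i j : ι) :
    a.toBasis.toMatrix b i j = inner 𝕜 (a i) (b j) := by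
  rw [Module.Basis.toMatrix_apply, OrthonormalBasis.coe_toBasis_repr_apply,
    OrthonormalBasis.repr_apply_apply]

end

theorem angle_subspaces_eq_angle_orthogonal_complements_general {V : Type*} [NormedAddCommGroup V]
    [InnerProductSpace ℝ V] {m n : ℕ} (S1 S2 : Submodule ℝ V)
    (a b : Fin n → V) (astar bstar : Fin (m - n) → V)
    (ha : Orthonormal ℝ a) (hb : Orthonormal ℝ b)
    (hastar : Orthonormal ℝ astar) (hbstar : Orthonormal ℝ bstar)
    (hspa : Submodule.span ℝ (Set.range a) = S1)
    (hspb : Submodule.span ℝ (Set.range b) = S2)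
    (hspas : Submodule.span ℝ (Set.range astar) = S1ᗮ)
    (hspbs : Submodule.span ℝ (Set.range bstar) = S2ᗮ) :
    |(Matrix.of fun i j => (inner ℝ (a i) (b j) : ℝ)).det| =
      |(Matrix.of fun i j => (inner ℝ (astar i) (bstar j) : ℝ)).det| := by
  set e := OrthonormalBasis.sumElimOfOrthogonal ha hastar hspa hspas
  set f := OrthonormalBasis.sumElimOfOrthogonal hb hbstar hspb hspbs
  have h₁₁ : (e.toBasis.toMatrix f).toBlocks₁₁ = Matrix.of fun i j => inner ℝ (a i) (b j) := by
    ext i j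
    rw [toBlocks₁₁, of_apply, of_apply, OrthonormalBasis.toBasis_toMatrix_apply]
    simp [e, f]
  have h₂₂ : (e.toBasis.toMatrix f).toBlocks₂₂ =
      Matrix.of fun i j => inner ℝ (astar i) (bstar j) := by
    ext i j
    rw [toBlocks₂₂, of_apply, of_apply, OrthonormalBasis.toBasis_toMatrix_apply]
    simp [e, f]
  rw [← sq_eq_sq_iff_abs_eq_abs, ← h₁₁, ← h₂₂]
  exact det_toBlocks₁₁_sq_eq_det_toBlocks₂₂_sq
    ((mem_orthogonalGroup_iff' _ _).mp (e.toMatrix_orthonormalBasis_mem_orthogonal f))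

theorem angle_subspaces_eq_angle_orthogonal_complements {V : Type*} [NormedAddCommGroup V]
    [InnerProductSpace ℝ V] [FiniteDimensional ℝ V] {m n : ℕ}
    (hm : Module.finrank ℝ V = m) (S1 S2 : Submodule ℝ V)
    (a b : Fin n → V) (astar bstar : Fin (m - n) → V)
    (ha : Orthonormal ℝ a) (hb : Orthonormal ℝ b)
    (hastar : Orthonormal ℝ astar) (hbstar : Orthonormal ℝ bstar)
    (hspa : Submodule.span ℝ (Set.range a) = S1)
    (hspb : Submodule.span ℝ (Set.range b) = S2)
    (hspas : Submodule.span ℝ (Set.range astar) = S1ᗮ)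
    (hspbs : Submodule.span ℝ (Set.range bstar) = S2ᗮ) :
    |(Matrix.of fun i j => (inner ℝ (a i) (b j) : ℝ)).det| =
      |(Matrix.of fun i j => (inner ℝ (astar i) (bstar j) : ℝ)).det| :=
  angle_subspaces_eq_angle_orthogonal_complements_general S1 S2 a b astar bstar ha hb hastar hbstar
    hspa hspb hspas hspbs
end
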